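/- Let $p \in (1,\infty)$, $\gamma \in \mathbb{C}$ with $0 < 1/p + \operatorname{Re}\gamma < 1$, and let $\omega : \mathbb{R}_+ \to \mathbb{R}$ be a bounded function satisfying $0 < \frac1p + \operatorname{Re}\gamma + \frac{1}{2\pi}\inf_{t}(\omega(t)\operatorname{Im}\gamma)$ and $\frac1p + \operatorname{Re}\gamma + \frac{1}{2\pi}\sup_{t}(\omega(t)\operatorname{Im}\gamma) < 1$. Define for $(t,x,\theta) \in \mathbb{R}_+ \times \mathbb{R} \times [0,1]$: $\tilde{\mathfrak{g}}(t,x,\theta) = 1 + \tfrac14[e^{2\pi\operatorname{Im}\gamma}(1 - e^{-i\theta\omega(t)x}) + e^{-2\pi\operatorname{Im}\gamma}(1 - e^{i\theta\omega(t)x})]\, r_\gamma(x) r_{\bar\gamma}(x)$, where $r_\gamma(x) = 1/\sinh[\pi(x+i/p+i\gamma)]$. Then there exists a constant $c > 0$, depending only on $p$, $\gamma$, and $\omega$, such that $|\tilde{\mathfrak{g}}(t,x,\theta)| \geq c$ for all $(t,x,\theta) \in \mathbb{R}_+ \times \mathbb{R} \times [0,1]$. -/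

import Mathlib

/-!
Write `β = 1/p + Re γ`, `b = Im γ` and `φ = θ ω(t) x`. The two denominators are `sinh z` and
`sinh w` with `z = π(x - b) + iπβ`, `w = π(x + b) + iπβ`, and the product-to-sum formula turns
the numerator into `sinh(z + iφ/2) sinh(w - iφ/2)`. The denominators have moduli at most
`cosh π(x ∓ b)`. The numerator factors have imaginary parts `πκ ± θ ω(t) (x ∓ b)/2`, where
`κ = β + θ ω(t) b/(2π)` ranges, by the hypotheses on `inf` and `sup`, over a compact subinterval
of `(0, 1)`. Such a factor `sinh(y + iψ)` has modulus at least `c cosh y`: for `|y|` large because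
of `|sinh y|`, for `|y|` small because then `ψ - πκ = O(|y|)` keeps `ψ` away from `0` and `π`, and
`|sinh(y + iψ)| ≥ |sin ψ| cosh y`. Hence the symbol has modulus at least `c²`.
-/

open Complex Real

namespace Complex

theorem sq_norm_sinh_add_mul_I (y ψ : ℝ) :
    ‖sinh (y + ψ * I)‖ ^ 2 = Real.sinh y ^ 2 + Real.sin ψ ^ 2 := by
  have h : sinh (y + ψ * I)
      = (Real.sinh y * Real.cos ψ : ℝ) + (Real.cosh y * Real.sin ψ : ℝ) * I := by
    rw [sinh_add, sinh_mul_I, cosh_mul_I]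
    push_cast
    ring
  rw [h, Complex.sq_norm, normSq_add_mul_I]
  linear_combination Real.sinh y ^ 2 * Real.sin_sq_add_cos_sq ψ + Real.sin ψ ^ 2 * Real.cosh_sq y

theorem abs_sinh_le_norm_sinh_add_mul_I (y ψ : ℝ) :
    |Real.sinh y| ≤ ‖sinh (y + ψ * I)‖ := by
  refine abs_le_of_sq_le_sq ?_ (norm_nonneg _)
  rw [sq_norm_sinh_add_mul_I]
  exact le_add_of_nonneg_right (sq_nonneg _)

theorem abs_sin_mul_cosh_le_norm_sinh_add_mul_I (y ψ : ℝ) :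
    |Real.sin ψ| * Real.cosh y ≤ ‖sinh (y + ψ * I)‖ := by
  refine le_of_pow_le_pow_left₀ two_ne_zero (norm_nonneg _) ?_
  rw [sq_norm_sinh_add_mul_I, mul_pow, sq_abs]
  nlinarith [Real.cosh_sq y, Real.sin_sq_add_cos_sq ψ, sq_nonneg (Real.cos ψ * Real.sinh y)]

theorem norm_sinh_add_mul_I_le_cosh (y ψ : ℝ) : ‖sinh (y + ψ * I)‖ ≤ Real.cosh y := by
  refine le_of_pow_le_pow_left₀ two_ne_zero (Real.cosh_pos y).le ?_
  rw [sq_norm_sinh_add_mul_I]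
  nlinarith [Real.cosh_sq y, Real.sin_sq_le_one ψ]

theorem sinh_add_mul_I_ne_zero (y : ℝ) {ψ : ℝ} (hψ : Real.sin ψ ≠ 0) :
    sinh (y + ψ * I) ≠ 0 :=
  norm_pos_iff.1 <| (mul_pos (abs_pos.2 hψ) (Real.cosh_pos y)).trans_le
    (abs_sin_mul_cosh_le_norm_sinh_add_mul_I y ψ)

theorem sinh_add_mul_sinh_sub (z w u : ℂ) :
    sinh (z + u) * sinh (w - u) = sinh z * sinh w
      + (exp (w - z) * (1 - exp (-(2 * u))) + exp (z - w) * (1 - exp (2 * u))) / 4 := by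
  simp only [sinh, exp_add, exp_sub, exp_neg, two_mul]
  field_simp
  ring

theorem one_add_div_sinh_mul_sinh {z w u : ℂ} (hz : sinh z ≠ 0) (hw : sinh w ≠ 0) :
    1 + 1 / 4 * (exp (w - z) * (1 - exp (-(2 * u))) + exp (z - w) * (1 - exp (2 * u)))
        * (1 / sinh z) * (1 / sinh w)
      = sinh (z + u) * sinh (w - u) / (sinh z * sinh w) := by
  rw [sinh_add_mul_sinh_sub]
  field_simp

end Complex

theorem Real.tanh_mul_cosh_le_abs_sinh {δ y : ℝ} (h : δ ≤ |y|) :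
    Real.tanh δ * Real.cosh y ≤ |Real.sinh y| := by
  have hsub : 0 ≤ Real.sinh (|y| - δ) := Real.sinh_nonneg_iff.2 (by linarith)
  rw [Real.sinh_sub] at hsub
  rw [Real.tanh_eq_sinh_div_cosh, Real.abs_sinh, ← Real.cosh_abs y, div_mul_eq_mul_div,
    div_le_iff₀ (Real.cosh_pos δ)]
  linarith

theorem Real.sin_le_sin_of_mem_Icc_pi_sub {η ψ : ℝ} (hη : -(π / 2) ≤ η)
    (hψ : ψ ∈ Set.Icc η (π - η)) : Real.sin η ≤ Real.sin ψ := by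
  obtain ⟨h₁, h₂⟩ := hψ
  rcases le_total ψ (π / 2) with h | h
  · exact Real.sin_le_sin_of_le_of_le_pi_div_two hη h h₁
  · rw [← Real.sin_pi_sub ψ]
    exact Real.sin_le_sin_of_le_of_le_pi_div_two hη (by linarith) (by linarith)

theorem exists_pos_mul_cosh_le_norm_sinh {a b : ℝ} (ha : 0 < a) (hab : a ≤ b) (hb : b < π)
    (M : ℝ) :
    ∃ c > 0, ∀ y ψ ψ₀ : ℝ, ψ₀ ∈ Set.Icc a b → |ψ - ψ₀| ≤ M * |y| →
      c * Real.cosh y ≤ ‖Complex.sinh (y + ψ * I)‖ := by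
  set η := min a (π - b) / 2 with hη_def
  have hη : 0 < η := half_pos (lt_min ha (by linarith))
  have hηa : 2 * η ≤ a := by linarith [hη_def, min_le_left a (π - b)]
  have hηb : b ≤ π - 2 * η := by linarith [hη_def, min_le_right a (π - b)]
  -- below `δ`, the deviation `|ψ - ψ₀|` is at most `η`
  set δ := η / (|M| + 1)
  have hδ : 0 < δ := by positivity
  have hMδ : |M| * δ ≤ η := by
    have : (|M| + 1) * δ = η := mul_div_cancel₀ η (by positivity)
    nlinarith
  have htanh : 0 < Real.tanh δ := by
    rw [Real.tanh_eq_sinh_div_cosh]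
    exact div_pos (Real.sinh_pos_iff.2 hδ) (Real.cosh_pos δ)
  have hsin : 0 < Real.sin η := Real.sin_pos_of_pos_of_lt_pi hη (by linarith)
  refine ⟨min (Real.tanh δ) (Real.sin η), lt_min htanh hsin, fun y ψ ψ₀ hψ₀ hψ => ?_⟩
  rcases le_or_gt δ |y| with hy | hy
  · calc min (Real.tanh δ) (Real.sin η) * Real.cosh y ≤ Real.tanh δ * Real.cosh y := by
          gcongr; exact min_le_left _ _
      _ ≤ |Real.sinh y| := Real.tanh_mul_cosh_le_abs_sinh hy
      _ ≤ _ := Complex.abs_sinh_le_norm_sinh_add_mul_I y ψ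
  · have hdev : |ψ - ψ₀| ≤ η :=
      hψ.trans ((mul_le_mul_of_nonneg_right (le_abs_self M) (abs_nonneg y)).trans
        ((mul_le_mul_of_nonneg_left hy.le (abs_nonneg M)).trans hMδ))
    have hmem : ψ ∈ Set.Icc η (π - η) := by
      obtain ⟨h₁, h₂⟩ := abs_le.1 hdev
      constructor <;> linarith [hψ₀.1, hψ₀.2]
    calc min (Real.tanh δ) (Real.sin η) * Real.cosh y ≤ Real.sin η * Real.cosh y := by
          gcongr; exact min_le_right _ _
      _ ≤ |Real.sin ψ| * Real.cosh y := by
        gcongr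
        exact (Real.sin_le_sin_of_mem_Icc_pi_sub (by linarith) hmem).trans (le_abs_self _)
      _ ≤ _ := Complex.abs_sin_mul_cosh_le_norm_sinh_add_mul_I y ψ

theorem mul_mem_Icc_min_max {θ v m m' : ℝ} (hθ : θ ∈ Set.Icc 0 1) (hv : v ∈ Set.Icc m m') :
    θ * v ∈ Set.Icc (min 0 m) (max 0 m') := by
  obtain ⟨hθ₀, hθ₁⟩ := hθ
  obtain ⟨hm, hm'⟩ := hv
  rcases le_total 0 v with h | h
  · exact ⟨(min_le_left _ _).trans (mul_nonneg hθ₀ h),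
      (mul_le_of_le_one_left h hθ₁).trans (hm'.trans (le_max_right _ _))⟩
  · exact ⟨(min_le_right _ _).trans (hm.trans (le_mul_of_le_one_left h hθ₁)),
      (mul_nonpos_of_nonneg_of_nonpos hθ₀ h).trans (le_max_left _ _)⟩

theorem exists_Icc_mem_of_iInf_iSup {ι : Type*} {f : ι → ℝ}
    (hf : Bornology.IsBounded (Set.range f)) {β : ℝ} (h1 : 0 < β) (h2 : β < 1)
    (hinf : 0 < β + (⨅ i, f i) / (2 * π)) (hsup : β + (⨆ i, f i) / (2 * π) < 1) :
    ∃ a b, 0 < a ∧ a ≤ b ∧ b < π ∧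
      ∀ i, ∀ θ ∈ Set.Icc (0:ℝ) 1, π * β + θ * f i / 2 ∈ Set.Icc a b := by
  refine ⟨π * β + min 0 (⨅ i, f i) / 2, π * β + max 0 (⨆ i, f i) / 2, ?_, ?_, ?_, ?_⟩
  · rcases min_choice 0 (⨅ i, f i) with h | h <;> rw [h]
    · simpa using mul_pos Real.pi_pos h1
    · rw [show π * β + (⨅ i, f i) / 2 = π * (β + (⨅ i, f i) / (2 * π)) by field_simp]
      exact mul_pos Real.pi_pos hinf
  · linarith [min_le_left 0 (⨅ i, f i), le_max_left 0 (⨆ i, f i)]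
  · rcases max_choice 0 (⨆ i, f i) with h | h <;> rw [h]
    · simpa using mul_lt_mul_of_pos_left h2 Real.pi_pos
    · rw [show π * β + (⨆ i, f i) / 2 = π * (β + (⨆ i, f i) / (2 * π)) by field_simp]
      simpa using mul_lt_mul_of_pos_left hsup Real.pi_pos
  · intro i θ hθ
    obtain ⟨hlo, hhi⟩ :=
      mul_mem_Icc_min_max hθ ⟨ciInf_le hf.bddBelow i, le_ciSup hf.bddAbove i⟩
    constructor <;> linarith

theorem symbol_eq_sinh_mul_sinh_div (p : ℝ) (γ : ℂ) (θ ω x : ℝ)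
    (hsin : Real.sin (π * (1 / p + γ.re)) ≠ 0) :
    1 + (1 / 4) * (Complex.exp (2 * (π : ℂ) * γ.im) * (1 - Complex.exp (-(I * θ * ω * x)))
          + Complex.exp (-(2 * (π : ℂ) * γ.im)) * (1 - Complex.exp (I * θ * ω * x)))
        * (1 / Complex.sinh (π * (x + I / p + I * γ)))
        * (1 / Complex.sinh (π * (x + I / p + I * (starRingEnd ℂ γ))))
      = Complex.sinh (↑(π * (x - γ.im)) + ↑(π * (1 / p + γ.re) + θ * ω * x / 2) * I)
          * Complex.sinh (↑(π * (x + γ.im)) + ↑(π * (1 / p + γ.re) - θ * ω * x / 2) * I)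
        / (Complex.sinh (↑(π * (x - γ.im)) + ↑(π * (1 / p + γ.re)) * I)
          * Complex.sinh (↑(π * (x + γ.im)) + ↑(π * (1 / p + γ.re)) * I)) := by
  set z : ℂ := ↑(π * (x - γ.im)) + ↑(π * (1 / p + γ.re)) * I
  set w : ℂ := ↑(π * (x + γ.im)) + ↑(π * (1 / p + γ.re)) * I
  set u : ℂ := ↑(θ * ω * x / 2) * I
  have hz : (π : ℂ) * (x + I / p + I * γ) = z := by
    simp only [z]
    push_cast
    linear_combination
      (-(π : ℂ) * I) * Complex.re_add_im γ + ((π : ℂ) * γ.im) * Complex.I_sq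
  have hw : (π : ℂ) * (x + I / p + I * (starRingEnd ℂ γ)) = w := by
    have hconj := Complex.re_add_im (starRingEnd ℂ γ)
    rw [Complex.conj_re, Complex.conj_im, Complex.ofReal_neg] at hconj
    simp only [w]
    push_cast
    linear_combination (-(π : ℂ) * I) * hconj - ((π : ℂ) * γ.im) * Complex.I_sq
  have hwz : 2 * (π : ℂ) * γ.im = w - z := by simp only [z, w]; push_cast; ring
  have hu : I * θ * ω * x = 2 * u := by simp only [u]; push_cast; ring
  have hzu : z + u = ↑(π * (x - γ.im)) + ↑(π * (1 / p + γ.re) + θ * ω * x / 2) * I := by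
    simp only [z, u]; push_cast; ring
  have hwu : w - u = ↑(π * (x + γ.im)) + ↑(π * (1 / p + γ.re) - θ * ω * x / 2) * I := by
    simp only [w, u]; push_cast; ring
  rw [hz, hw, hwz, neg_sub, hu, Complex.one_add_div_sinh_mul_sinh
    (Complex.sinh_add_mul_I_ne_zero _ hsin) (Complex.sinh_add_mul_I_ne_zero _ hsin), hzu, hwu]

theorem sq_le_mul_div_mul {c A B P Q U V : ℝ} (hc : 0 ≤ c) (hP : c * A ≤ P) (hQ : c * B ≤ Q)
    (hU : 0 < U) (hUA : U ≤ A) (hV : 0 < V) (hVB : V ≤ B) : c ^ 2 ≤ P * Q / (U * V) := by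
  have hA : 0 ≤ A := hU.le.trans hUA
  have hB : 0 ≤ B := hV.le.trans hVB
  rw [le_div_iff₀ (mul_pos hU hV)]
  calc c ^ 2 * (U * V) ≤ c ^ 2 * (A * B) := by gcongr
    _ = (c * A) * (c * B) := by ring
    _ ≤ P * Q := mul_le_mul hP hQ (by positivity) ((by positivity : 0 ≤ c * A).trans hP)

theorem symbol_lower_bound_general (p : ℝ) (γ : ℂ)
    (h1 : 0 < 1 / p + γ.re) (h2 : 1 / p + γ.re < 1)
    (ω : ℝ → ℝ) (hbd : ∃ M : ℝ, ∀ t : ℝ, 0 < t → |ω t| ≤ M)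
    (hinf : 0 < 1 / p + γ.re + (⨅ t : Set.Ioi (0:ℝ), ω t * γ.im) / (2 * Real.pi))
    (hsup : 1 / p + γ.re + (⨆ t : Set.Ioi (0:ℝ), ω t * γ.im) / (2 * Real.pi) < 1) :
    ∃ c : ℝ, 0 < c ∧ ∀ t : ℝ, 0 < t → ∀ x : ℝ, ∀ θ ∈ Set.Icc (0:ℝ) 1,
      c ≤ Norm.norm
        (1 + (1 / 4) * (Complex.exp (2 * (Real.pi : ℂ) * γ.im)
              * (1 - Complex.exp (-(Complex.I * (θ : ℂ) * (ω t : ℂ) * (x : ℂ))))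
            + Complex.exp (-(2 * (Real.pi : ℂ) * γ.im))
              * (1 - Complex.exp (Complex.I * (θ : ℂ) * (ω t : ℂ) * (x : ℂ))))
          * (1 / Complex.sinh ((Real.pi : ℂ) * (x + Complex.I / p + Complex.I * γ)))
          * (1 / Complex.sinh ((Real.pi : ℂ) * (x + Complex.I / p + Complex.I * (starRingEnd ℂ γ))))) := by
  obtain ⟨M, hM⟩ := hbd
  have hbounded : Bornology.IsBounded (Set.range fun t : Set.Ioi (0:ℝ) => ω t * γ.im) := by
    refine isBounded_iff_forall_norm_le.2 ⟨M * |γ.im|, ?_⟩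
    rintro _ ⟨t, rfl⟩
    rw [Real.norm_eq_abs, abs_mul]
    exact mul_le_mul_of_nonneg_right (hM t t.2) (abs_nonneg _)
  obtain ⟨a, b, ha, hab, hb, hangle⟩ := exists_Icc_mem_of_iInf_iSup hbounded h1 h2 hinf hsup
  obtain ⟨c, hc, hcosh⟩ := exists_pos_mul_cosh_le_norm_sinh ha hab hb (M / (2 * π))
  refine ⟨c ^ 2, by positivity, fun t ht x θ hθ => ?_⟩
  have hsin : 0 < Real.sin (π * (1 / p + γ.re)) :=
    Real.sin_pos_of_pos_of_lt_pi (mul_pos Real.pi_pos h1) (by nlinarith [Real.pi_pos])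
  have hθω : |θ * ω t / (2 * π)| ≤ M / (2 * π) := by
    rw [abs_div, abs_mul, abs_of_nonneg hθ.1, abs_of_pos Real.two_pi_pos]
    gcongr
    nlinarith [hM t ht, hθ.2, abs_nonneg (ω t)]
  have hψ₀ := hangle ⟨t, ht⟩ θ hθ
  rw [symbol_eq_sinh_mul_sinh_div p γ θ (ω t) x hsin.ne', norm_div, norm_mul, norm_mul]
  refine sq_le_mul_div_mul hc.le (hcosh _ _ _ hψ₀ ?_) (hcosh _ _ _ hψ₀ ?_)
    (norm_pos_iff.2 (sinh_add_mul_I_ne_zero _ hsin.ne')) (norm_sinh_add_mul_I_le_cosh _ _)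
    (norm_pos_iff.2 (sinh_add_mul_I_ne_zero _ hsin.ne')) (norm_sinh_add_mul_I_le_cosh _ _)
  · rw [show _ - _ = θ * ω t / (2 * π) * (π * (x - γ.im)) by field_simp; ring, abs_mul]
    exact mul_le_mul_of_nonneg_right hθω (abs_nonneg _)
  · rw [show _ - _ = -(θ * ω t / (2 * π)) * (π * (x + γ.im)) by field_simp; ring,
      abs_mul, abs_neg]
    exact mul_le_mul_of_nonneg_right hθω (abs_nonneg _)

theorem symbol_lower_bound (p : ℝ) (hp : 1 < p) (γ : ℂ)
    (h1 : 0 < 1 / p + γ.re) (h2 : 1 / p + γ.re < 1)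
    (ω : ℝ → ℝ) (hbd : ∃ M : ℝ, ∀ t : ℝ, 0 < t → |ω t| ≤ M)
    (hinf : 0 < 1 / p + γ.re + (⨅ t : Set.Ioi (0:ℝ), ω t * γ.im) / (2 * Real.pi))
    (hsup : 1 / p + γ.re + (⨆ t : Set.Ioi (0:ℝ), ω t * γ.im) / (2 * Real.pi) < 1) :
    ∃ c : ℝ, 0 < c ∧ ∀ t : ℝ, 0 < t → ∀ x : ℝ, ∀ θ ∈ Set.Icc (0:ℝ) 1,
      c ≤ Norm.norm
        (1 + (1 / 4) * (Complex.exp (2 * (Real.pi : ℂ) * γ.im)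
              * (1 - Complex.exp (-(Complex.I * (θ : ℂ) * (ω t : ℂ) * (x : ℂ))))
            + Complex.exp (-(2 * (Real.pi : ℂ) * γ.im))
              * (1 - Complex.exp (Complex.I * (θ : ℂ) * (ω t : ℂ) * (x : ℂ))))
          * (1 / Complex.sinh ((Real.pi : ℂ) * (x + Complex.I / p + Complex.I * γ)))
          * (1 / Complex.sinh ((Real.pi : ℂ) * (x + Complex.I / p + Complex.I * (starRingEnd ℂ γ))))) :=
  symbol_lower_bound_general p γ h1 h2 ω hbd hinf hsup
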